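/- arXiv:2603.17448 — 2 statements merged into one kernel-verified Lean document; each statement's English description precedes it below -/
import Mathlib

section
/- Let k₁, k₂ > 0 satisfy k₂³/k₁² > 1/6, suppose r(x) > k₂ on (x', x'') and 0 < r'(x) < k₁ on (x', x*). Then for any x₀ ∈ (x', x*), the Halley iterates converge monotonically increasing to x*. -/
/-!
Along a solution of `f'' + r f = 0` the quotient `h = f / f'` solves the Riccati equation
`h' = 1 + r h²`, so Halley's map `F(t) = t - 2h / (2 + r h²)` has derivative
`F' = h² (3r²h² + 2r'h + 2r) / (2 + r h²)²`. The quadratic factor has discriminant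
`4(r'² - 6r³) < 0`, so `F` is increasing left of `x*`. Since `h` is increasing and vanishes at
`x*`, it is negative to the left of `x*`, so each step moves right; as `F(x*) = x*`, it stays
below `x*`. The iterates therefore increase to a limit, which is a fixed point of `F` and can
only be `x*`.
-/

open Set Filter Topology

/-- Halley's map for `f'' + r f = 0`, written in terms of `h = f / f'`. -/
noncomputable def halleyStep (r h : ℝ → ℝ) (t : ℝ) : ℝ :=
  t - 2 * h t / (2 + r t * h t ^ 2)

noncomputable def halleyStepDeriv (r r' h : ℝ) : ℝ :=
  h ^ 2 * (3 * r ^ 2 * h ^ 2 + 2 * r' * h + 2 * r) / (2 + r * h ^ 2) ^ 2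

theorem halleyStep_eq_self {r h : ℝ → ℝ} {t : ℝ} (ht : h t = 0) : halleyStep r h t = t := by
  simp [halleyStep, ht]

theorem lt_halleyStep {r h : ℝ → ℝ} {t : ℝ} (hh : h t < 0) (hr : 0 ≤ r t) :
    t < halleyStep r h t := by
  have hD : 0 < 2 + r t * h t ^ 2 := by positivity
  have : 2 * h t / (2 + r t * h t ^ 2) < 0 := div_neg_of_neg_of_pos (by linarith) hD
  unfold halleyStep
  linarith

theorem hasDerivAt_div_deriv_of_ode {r f : ℝ → ℝ} {t : ℝ} (hf : DifferentiableAt ℝ f t)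
    (hf' : HasDerivAt (deriv f) (-(r t * f t)) t) (h0 : deriv f t ≠ 0) :
    HasDerivAt (fun s => f s / deriv f s) (1 + r t * (f t / deriv f t) ^ 2) t :=
  (hf.hasDerivAt.div hf' h0).congr_deriv (by field_simp; ring)

theorem hasDerivAt_halleyStep {r h : ℝ → ℝ} {r' t : ℝ} (hr : HasDerivAt r r' t)
    (hh : HasDerivAt h (1 + r t * h t ^ 2) t) (hD : 2 + r t * h t ^ 2 ≠ 0) :
    HasDerivAt (halleyStep r h) (halleyStepDeriv (r t) r' (h t)) t := by
  refine ((hasDerivAt_id t).sub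
    ((hh.const_mul 2).div ((hr.mul (hh.pow 2)).const_add 2) hD)).congr_deriv ?_
  simp only [halleyStepDeriv, Pi.mul_apply, Pi.pow_apply, Nat.cast_ofNat]
  field_simp
  ring

theorem halleyStepDeriv_pos {r r' h : ℝ} (hh : h ≠ 0) (hr' : r' ^ 2 < 6 * r ^ 3) :
    0 < halleyStepDeriv r r' h := by
  have hr : 0 < r := by
    by_contra! hr
    nlinarith [sq_nonneg r', pow_two_nonneg r]
  -- `3r² · (3r²h² + 2r'h + 2r) = (3r²h + r')² + (6r³ - r'²)`
  have hQ : 0 < 3 * r ^ 2 * h ^ 2 + 2 * r' * h + 2 * r := by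
    have : 0 < 3 * r ^ 2 * (3 * r ^ 2 * h ^ 2 + 2 * r' * h + 2 * r) := by
      nlinarith [sq_nonneg (3 * r ^ 2 * h + r')]
    exact pos_of_mul_pos_right this (by positivity)
  unfold halleyStepDeriv
  positivity

theorem sq_lt_six_mul_pow_three {k₁ k₂ a b : ℝ} (hk : k₂ ^ 3 / k₁ ^ 2 > 1 / 6) (ha : k₂ < a)
    (hb : b ∈ Ioo 0 k₁) : b ^ 2 < 6 * a ^ 3 := by
  have hk₁ : k₁ ^ 2 < 6 * k₂ ^ 3 := by
    have := (lt_div_iff₀ (pow_pos (hb.1.trans hb.2) 2)).1 hk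
    linarith
  have hbk : b ^ 2 < k₁ ^ 2 := pow_lt_pow_left₀ hb.2 hb.1.le two_ne_zero
  have hka : k₂ ^ 3 < a ^ 3 := Odd.strictMono_pow (by decide) ha
  linarith

theorem lt_of_hasDerivAt_pos {g g' : ℝ → ℝ} {a b : ℝ} (hab : a < b)
    (hg : ∀ t ∈ Icc a b, HasDerivAt g (g' t) t) (hpos : ∀ t ∈ Ioo a b, 0 < g' t) :
    g a < g b := by
  have hmono : StrictMonoOn g (Icc a b) := by
    refine strictMonoOn_of_hasDerivWithinAt_pos (f' := g') (convex_Icc a b)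
      (fun t ht => (hg t ht).continuousAt.continuousWithinAt) (fun t ht => ?_) ?_
    · rw [interior_Icc] at ht ⊢
      exact (hg t (Ioo_subset_Icc_self ht)).hasDerivWithinAt
    · simpa only [interior_Icc] using hpos
  exact hmono (left_mem_Icc.2 hab.le) (right_mem_Icc.2 hab.le) hab

theorem monotone_tendsto_of_self_lt_map_lt {F : ℝ → ℝ} {a c : ℝ} {x : ℕ → ℝ}
    (hF : ∀ t ∈ Ioo a c, t < F t ∧ F t < c) (hFc : ∀ t ∈ Ioo a c, ContinuousAt F t)
    (hx₀ : x 0 ∈ Ioo a c) (hx : ∀ n, x (n + 1) = F (x n)) :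
    Monotone x ∧ (∀ n, x n < c) ∧ Tendsto x atTop (𝓝 c) := by
  have hmem : ∀ n, x n ∈ Ioo a c := by
    intro n
    induction n with
    | zero => exact hx₀
    | succ n ih => rw [hx]; exact ⟨ih.1.trans (hF _ ih).1, (hF _ ih).2⟩
  have hmono : Monotone x :=
    monotone_nat_of_le_succ fun n => by rw [hx]; exact (hF _ (hmem n)).1.le
  have hbdd : BddAbove (range x) := ⟨c, forall_mem_range.2 fun n => (hmem n).2.le⟩
  have hlim : Tendsto x atTop (𝓝 (⨆ n, x n)) := tendsto_atTop_ciSup hmono hbdd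
  have hsup : ⨆ n, x n = c := by
    refine (ciSup_le fun n => (hmem n).2.le).eq_of_not_lt fun hlt => ?_
    have hL : ⨆ n, x n ∈ Ioo a c := ⟨(hmem 0).1.trans_le (le_ciSup hbdd 0), hlt⟩
    have hfix : F (⨆ n, x n) = ⨆ n, x n :=
      tendsto_nhds_unique ((hFc _ hL).tendsto.comp hlim)
        (by simpa only [Function.comp_def, hx] using (tendsto_add_atTop_iff_nat 1).2 hlim)
    exact (hF _ hL).1.ne' hfix
  exact ⟨hmono, fun n => (hmem n).2, hsup ▸ hlim⟩

theorem halley_nonlocal_convergence_increasing_r_general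
    (r f : ℝ → ℝ) (x' x'' xs x₀ k₁ k₂ : ℝ) (x : ℕ → ℝ)
    (hk₂ : 0 < k₂) (hk : k₂ ^ 3 / k₁ ^ 2 > 1 / 6)
    (hr : ContDiff ℝ 1 r)
    (hf1 : Differentiable ℝ f) (hf2 : Differentiable ℝ (deriv f))
    (hode : ∀ t ∈ Set.Ioo x' x'', deriv (deriv f) t + r t * f t = 0)
    (hcons : ∀ t ∈ Set.Ioo x' x'', deriv f t ≠ 0)
    (hxs : xs ∈ Set.Ioo x' x'') (hfxs : f xs = 0)
    (hrlow : ∀ t ∈ Set.Ioo x' x'', k₂ < r t)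
    (hrder : ∀ t ∈ Set.Ioo x' xs, 0 < deriv r t ∧ deriv r t < k₁)
    (hx0 : x₀ ∈ Set.Ioo x' xs)
    (hseq0 : x 0 = x₀)
    (hseq : ∀ n, x (n + 1) = x n
      - 2 * (f (x n) / deriv f (x n)) / (2 + r (x n) * (f (x n) / deriv f (x n)) ^ 2)) :
    Monotone x ∧ (∀ n, x n < xs) ∧ Filter.Tendsto x Filter.atTop (nhds xs) := by
  obtain ⟨hx's, hsx''⟩ := hxs
  set h : ℝ → ℝ := fun s => f s / deriv f s
  have hI : Ioo x' xs ⊆ Ioo x' x'' := Ioo_subset_Ioo_right hsx''.le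
  have hIcc : ∀ t ∈ Ioo x' xs, Icc t xs ⊆ Ioo x' x'' := fun t ht u hu =>
    ⟨ht.1.trans_le hu.1, hu.2.trans_lt hsx''⟩
  have hr₀ : ∀ t ∈ Ioo x' x'', 0 ≤ r t := fun t ht => (hk₂.trans (hrlow t ht)).le
  have hrh : ∀ t ∈ Ioo x' x'', 0 ≤ r t * h t ^ 2 := fun t ht =>
    mul_nonneg (hr₀ t ht) (sq_nonneg _)
  have hh : ∀ t ∈ Ioo x' x'', HasDerivAt h (1 + r t * h t ^ 2) t := fun t ht =>
    hasDerivAt_div_deriv_of_ode (hf1 t)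
      ((hf2 t).hasDerivAt.congr_deriv (eq_neg_of_add_eq_zero_left (hode t ht))) (hcons t ht)
  have hF : ∀ t ∈ Ioo x' x'',
      HasDerivAt (halleyStep r h) (halleyStepDeriv (r t) (deriv r t) (h t)) t := fun t ht =>
    hasDerivAt_halleyStep (hr.differentiable one_ne_zero t).hasDerivAt (hh t ht)
      (by linarith [hrh t ht])
  have hneg : ∀ t ∈ Ioo x' xs, h t < 0 := fun t ht => by
    have := lt_of_hasDerivAt_pos ht.2 (fun u hu => hh u (hIcc t ht hu))
      (fun u hu => by linarith [hrh u (hIcc t ht (Ioo_subset_Icc_self hu))])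
    simpa [h, hfxs] using this
  have hstep : ∀ t ∈ Ioo x' xs, t < halleyStep r h t ∧ halleyStep r h t < xs := fun t ht => by
    refine ⟨lt_halleyStep (hneg t ht) (hr₀ t (hI ht)), ?_⟩
    have hsub : Ioo t xs ⊆ Ioo x' xs := Ioo_subset_Ioo_left ht.1.le
    have := lt_of_hasDerivAt_pos ht.2 (fun u hu => hF u (hIcc t ht hu)) fun u hu =>
      halleyStepDeriv_pos (hneg u (hsub hu)).ne
        (sq_lt_six_mul_pow_three hk (hrlow u (hI (hsub hu))) (hrder u (hsub hu)))
    rwa [halleyStep_eq_self (t := xs) (by simp [h, hfxs])] at this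
  exact monotone_tendsto_of_self_lt_map_lt hstep (fun t ht => (hF t (hI ht)).continuousAt)
    (hseq0 ▸ hx0) hseq

theorem halley_nonlocal_convergence_increasing_r
    (r f : ℝ → ℝ) (x' x'' xs x₀ k₁ k₂ : ℝ) (x : ℕ → ℝ)
    (hk₁ : 0 < k₁) (hk₂ : 0 < k₂) (hk : k₂ ^ 3 / k₁ ^ 2 > 1 / 6)
    (hr : ContDiff ℝ 1 r)
    (hf1 : Differentiable ℝ f) (hf2 : Differentiable ℝ (deriv f))
    (hode : ∀ t ∈ Set.Ioo x' x'', deriv (deriv f) t + r t * f t = 0)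
    (hnt : ∃ t ∈ Set.Ioo x' x'', f t ≠ 0)
    (hlt : x' < x'')
    (hz' : deriv f x' = 0) (hz'' : deriv f x'' = 0)
    (hcons : ∀ t ∈ Set.Ioo x' x'', deriv f t ≠ 0)
    (hxs : xs ∈ Set.Ioo x' x'') (hfxs : f xs = 0)
    (huniq : ∀ t ∈ Set.Ioo x' x'', f t = 0 → t = xs)
    (hrlow : ∀ t ∈ Set.Ioo x' x'', k₂ < r t)
    (hrder : ∀ t ∈ Set.Ioo x' xs, 0 < deriv r t ∧ deriv r t < k₁)
    (hx0 : x₀ ∈ Set.Ioo x' xs)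
    (hseq0 : x 0 = x₀)
    (hseq : ∀ n, x (n + 1) = x n
      - 2 * (f (x n) / deriv f (x n)) / (2 + r (x n) * (f (x n) / deriv f (x n)) ^ 2)) :
    Monotone x ∧ (∀ n, x n < xs) ∧ Filter.Tendsto x Filter.atTop (nhds xs) :=
  halley_nonlocal_convergence_increasing_r_general r f x' x'' xs x₀ k₁ k₂ x hk₂ hk hr hf1 hf2 hode
    hcons hxs hfxs hrlow hrder hx0 hseq0 hseq
end

section
/- Let c₁, c₂ > 0 with c₁/c₂ ≤ 3/2 and c₂ < r(x) < c₁ on (x', x''). Then for any x₀ ∈ (x', x''), the modified Halley iterates x_{n+1} = x_n − 2h(x_n)/(2 + r(x₀)h(x_n)²) converge monotonically to x*. -/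
/-!
`h = f / f'` satisfies the Riccati equation `h' = 1 + r h²`, so it increases strictly through its
unique zero `x*`. The iteration map `g t = t - 2 h / (2 + α h²)` has
`g' = 1 - h' (4 - 2 α h²) / (2 + α h²)²`, which is nonnegative as soon as `2 r ≤ 3 α`; this is
what `c₁ / c₂ ≤ 3 / 2` guarantees. Hence `g` is monotone, fixes exactly `x*`, and moves every
other point towards `x*` without overshooting it. The iterates thus form a monotone sequence
bounded by `x*`, whose limit is a fixed point of `g`, i.e. `x*`.
-/

open Set Filter Topology

section Iteration

variable {g : ℝ → ℝ} {a b : ℝ} {x : ℕ → ℝ}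

theorem antitone_tendsto_of_iterate_le (hg : ContinuousOn g (Icc a b))
    (hmaps : ∀ t ∈ Icc a b, a ≤ g t ∧ g t ≤ t) (hfix : ∀ t ∈ Icc a b, g t = t → t = a)
    (hx0 : x 0 ∈ Icc a b) (hx : ∀ n, x (n + 1) = g (x n)) :
    Antitone x ∧ Tendsto x atTop (𝓝 a) := by
  have hmem : ∀ n, x n ∈ Icc a b := by
    intro n
    induction n with
    | zero => exact hx0
    | succ n ih => rw [hx]; exact ⟨(hmaps _ ih).1, (hmaps _ ih).2.trans ih.2⟩
  have hanti : Antitone x := antitone_nat_of_succ_le fun n => hx n ▸ (hmaps _ (hmem n)).2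
  obtain ⟨L, hL⟩ : ∃ L, Tendsto x atTop (𝓝 L) :=
    ⟨_, tendsto_atTop_ciInf hanti ⟨a, forall_mem_range.2 fun n => (hmem n).1⟩⟩
  have hLmem : L ∈ Icc a b := isClosed_Icc.mem_of_tendsto hL (Eventually.of_forall hmem)
  have hgL : g L = L := by
    have hgx : Tendsto (fun n => g (x n)) atTop (𝓝 (g L)) :=
      (hg L hLmem).tendsto.comp (tendsto_nhdsWithin_iff.2 ⟨hL, Eventually.of_forall hmem⟩)
    refine tendsto_nhds_unique hgx ?_
    simpa only [hx] using (tendsto_add_atTop_iff_nat 1).2 hL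
  exact ⟨hanti, hfix L hLmem hgL ▸ hL⟩

theorem monotone_tendsto_of_le_iterate (hg : ContinuousOn g (Icc a b))
    (hmaps : ∀ t ∈ Icc a b, t ≤ g t ∧ g t ≤ b) (hfix : ∀ t ∈ Icc a b, g t = t → t = b)
    (hx0 : x 0 ∈ Icc a b) (hx : ∀ n, x (n + 1) = g (x n)) :
    Monotone x ∧ Tendsto x atTop (𝓝 b) := by
  have hneg : ∀ t ∈ Icc (-b) (-a), -t ∈ Icc a b := fun t ht =>
    ⟨by linarith [ht.2], by linarith [ht.1]⟩
  obtain ⟨hanti, hlim⟩ :=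
    antitone_tendsto_of_iterate_le (g := fun s => -g (-s)) (x := fun n => -x n)
      ((hg.comp continuousOn_neg hneg).neg)
      (fun t ht => by have := hmaps _ (hneg t ht); constructor <;> linarith)
      (fun t ht hgt => by linarith [hfix _ (hneg t ht) (by linarith)])
      ⟨neg_le_neg hx0.2, neg_le_neg hx0.1⟩ (fun n => by simp only [hx, neg_neg])
  exact ⟨fun m n hmn => neg_le_neg_iff.1 (hanti hmn), by simpa only [neg_neg] using hlim.neg⟩

theorem monotone_tendsto_of_monotoneOn {I : Set ℝ} {p : ℝ} (hI : I.OrdConnected)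
    (hmono : MonotoneOn g I) (hg : ContinuousOn g I) (hp : p ∈ I)
    (hfix : ∀ t ∈ I, g t = t → t = p) (hbelow : ∀ t ∈ I, t ≤ p → t ≤ g t)
    (habove : ∀ t ∈ I, p ≤ t → g t ≤ t) (hx0 : x 0 ∈ I) (hx : ∀ n, x (n + 1) = g (x n)) :
    ((x 0 ≤ p → Monotone x) ∧ (p ≤ x 0 → Antitone x)) ∧ Tendsto x atTop (𝓝 p) := by
  have hgp : g p = p := le_antisymm (habove p hp le_rfl) (hbelow p hp le_rfl)
  have below (h0 : x 0 ≤ p) : Monotone x ∧ Tendsto x atTop (𝓝 p) := by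
    have hsub : Icc (x 0) p ⊆ I := hI.out hx0 hp
    refine monotone_tendsto_of_le_iterate (hg.mono hsub) (fun t ht => ?_)
      (fun t ht => hfix t (hsub ht)) ⟨le_rfl, h0⟩ hx
    exact ⟨hbelow t (hsub ht) ht.2, hgp ▸ hmono (hsub ht) hp ht.2⟩
  have above (h0 : p ≤ x 0) : Antitone x ∧ Tendsto x atTop (𝓝 p) := by
    have hsub : Icc p (x 0) ⊆ I := hI.out hp hx0
    refine antitone_tendsto_of_iterate_le (hg.mono hsub) (fun t ht => ?_)
      (fun t ht => hfix t (hsub ht)) ⟨h0, le_rfl⟩ hx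
    exact ⟨hgp ▸ hmono hp (hsub ht) ht.1, habove t (hsub ht) ht.1⟩
  refine ⟨⟨fun h0 => (below h0).1, fun h0 => (above h0).1⟩, ?_⟩
  rcases le_total (x 0) p with h0 | h0
  exacts [(below h0).2, (above h0).2]

end Iteration

theorem hasDerivAt_div_of_hasDerivAt_neg_mul {f f' : ℝ → ℝ} {ρ t : ℝ}
    (hf : HasDerivAt f (f' t) t) (hf' : HasDerivAt f' (-(ρ * f t)) t) (hne : f' t ≠ 0) :
    HasDerivAt (fun s => f s / f' s) (1 + ρ * (f t / f' t) ^ 2) t := by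
  refine (hf.div hf' hne).congr_deriv ?_
  field_simp
  ring

theorem strictMonoOn_of_hasDerivAt_riccati {h ρ : ℝ → ℝ} {I : Set ℝ} (hI : I.OrdConnected)
    (hρ : ∀ t ∈ I, 0 ≤ ρ t) (hh : ∀ t ∈ I, HasDerivAt h (1 + ρ t * h t ^ 2) t) :
    StrictMonoOn h I :=
  strictMonoOn_of_hasDerivWithinAt_pos hI.convex
    (fun t ht => (hh t ht).continuousAt.continuousWithinAt)
    (fun t ht => (hh t (interior_subset ht)).hasDerivWithinAt)
    (fun t ht => by have := hρ t (interior_subset ht); positivity)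

/-- With `α = r t` this is Halley's step `t - 2 f f' / (2 f'^2 - f f'')` for a solution of
`f'' + r f = 0`, written in terms of `h = f / f'`; the modified method freezes `α = r x₀`. -/
noncomputable def modifiedHalleyStep (α : ℝ) (h : ℝ → ℝ) (t : ℝ) : ℝ :=
  t - 2 * h t / (2 + α * h t ^ 2)

section ModifiedHalleyStep

variable {α : ℝ} {h : ℝ → ℝ} {t : ℝ}

theorem modifiedHalleyStep_eq_self_iff (hα : 0 ≤ α) : modifiedHalleyStep α h t = t ↔ h t = 0 := by
  have : 2 + α * h t ^ 2 ≠ 0 := by positivity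
  simp [modifiedHalleyStep, this]

theorem modifiedHalleyStep_le_self (hα : 0 ≤ α) (ht : 0 ≤ h t) : modifiedHalleyStep α h t ≤ t :=
  sub_le_self _ (by positivity)

theorem le_modifiedHalleyStep_self (hα : 0 ≤ α) (ht : h t ≤ 0) : t ≤ modifiedHalleyStep α h t :=
  (le_sub_self_iff _).2 (div_nonpos_of_nonpos_of_nonneg (by linarith) (by positivity))

theorem hasDerivAt_modifiedHalleyStep {h' : ℝ} (hα : 0 ≤ α) (hh : HasDerivAt h h' t) :
    HasDerivAt (modifiedHalleyStep α h)
      (1 - h' * (4 - 2 * α * h t ^ 2) / (2 + α * h t ^ 2) ^ 2) t := by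
  have hden : 2 + α * h t ^ 2 ≠ 0 := by positivity
  refine ((hasDerivAt_id t).sub ((hh.const_mul 2).div
    (((hh.pow 2).const_mul α).const_add 2) hden)).congr_deriv ?_
  simp only [Pi.pow_apply]
  field_simp
  ring

theorem one_add_mul_sq_mul_four_sub_le {ρ : ℝ} (u : ℝ) (hα : 0 ≤ α) (hρ : 0 ≤ ρ)
    (hρα : 2 * ρ ≤ 3 * α) : (1 + ρ * u ^ 2) * (4 - 2 * α * u ^ 2) ≤ (2 + α * u ^ 2) ^ 2 := by
  have hgap : (2 + α * u ^ 2) ^ 2 - (1 + ρ * u ^ 2) * (4 - 2 * α * u ^ 2)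
      = u ^ 2 * (6 * α - 4 * ρ) + (u ^ 2) ^ 2 * (α * (α + 2 * ρ)) := by ring
  have : 0 ≤ 6 * α - 4 * ρ := by linarith
  have : 0 ≤ u ^ 2 * (6 * α - 4 * ρ) + (u ^ 2) ^ 2 * (α * (α + 2 * ρ)) := by positivity
  linarith

theorem monotoneOn_modifiedHalleyStep {ρ : ℝ → ℝ} {I : Set ℝ} (hI : I.OrdConnected)
    (hα : 0 ≤ α) (hρ : ∀ t ∈ I, 0 ≤ ρ t ∧ 2 * ρ t ≤ 3 * α)
    (hh : ∀ t ∈ I, HasDerivAt h (1 + ρ t * h t ^ 2) t) :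
    MonotoneOn (modifiedHalleyStep α h) I :=
  monotoneOn_of_hasDerivWithinAt_nonneg hI.convex
    (fun t ht => (hasDerivAt_modifiedHalleyStep hα (hh t ht)).continuousAt.continuousWithinAt)
    (fun t ht => (hasDerivAt_modifiedHalleyStep hα (hh t (interior_subset ht))).hasDerivWithinAt)
    (fun t ht => by
      obtain ⟨hρ₀, hρα⟩ := hρ t (interior_subset ht)
      rw [sub_nonneg, div_le_one (by positivity)]
      exact one_add_mul_sq_mul_four_sub_le _ hα hρ₀ hρα)

end ModifiedHalleyStep

theorem modifiedHalley_monotone_tendsto {α : ℝ} {h ρ : ℝ → ℝ} {I : Set ℝ} {p : ℝ} {x : ℕ → ℝ}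
    (hI : I.OrdConnected) (hα : 0 ≤ α) (hρ : ∀ t ∈ I, 0 ≤ ρ t ∧ 2 * ρ t ≤ 3 * α)
    (hh : ∀ t ∈ I, HasDerivAt h (1 + ρ t * h t ^ 2) t) (hp : p ∈ I) (hp0 : h p = 0)
    (hx0 : x 0 ∈ I) (hx : ∀ n, x (n + 1) = modifiedHalleyStep α h (x n)) :
    ((x 0 ≤ p → Monotone x) ∧ (p ≤ x 0 → Antitone x)) ∧ Tendsto x atTop (𝓝 p) := by
  have hmono := strictMonoOn_of_hasDerivAt_riccati hI (fun t ht => (hρ t ht).1) hh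
  refine monotone_tendsto_of_monotoneOn hI (monotoneOn_modifiedHalleyStep hI hα hρ hh)
    (fun t ht => (hasDerivAt_modifiedHalleyStep hα (hh t ht)).continuousAt.continuousWithinAt) hp
    (fun t ht hfix =>
      hmono.injOn ht hp (((modifiedHalleyStep_eq_self_iff hα).1 hfix).trans hp0.symm))
    (fun t ht htp => le_modifiedHalleyStep_self hα (hp0 ▸ hmono.monotoneOn ht hp htp))
    (fun t ht hpt => modifiedHalleyStep_le_self hα (hp0 ▸ hmono.monotoneOn hp ht hpt)) hx0 hx

theorem modified_halley_global_convergence_general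
    (r f : ℝ → ℝ) (x' x'' xs x₀ c₁ c₂ : ℝ) (x : ℕ → ℝ)
    (hc₂ : 0 < c₂) (hratio : c₁ / c₂ ≤ 3 / 2)
    (hf1 : Differentiable ℝ f) (hf2 : Differentiable ℝ (deriv f))
    (hode : ∀ t ∈ Set.Ioo x' x'', deriv (deriv f) t + r t * f t = 0)
    (hcons : ∀ t ∈ Set.Ioo x' x'', deriv f t ≠ 0)
    (hxs : xs ∈ Set.Ioo x' x'') (hfxs : f xs = 0)
    (hrbd : ∀ t ∈ Set.Ioo x' x'', c₂ < r t ∧ r t < c₁)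
    (hx0 : x₀ ∈ Set.Ioo x' x'')
    (hseq0 : x 0 = x₀)
    (hseq : ∀ n, x (n + 1) = x n
      - 2 * (f (x n) / deriv f (x n)) / (2 + r x₀ * (f (x n) / deriv f (x n)) ^ 2)) :
    ((x₀ ≤ xs → Monotone x) ∧ (xs ≤ x₀ → Antitone x))
    ∧ Filter.Tendsto x Filter.atTop (nhds xs) := by
  rw [div_le_iff₀ hc₂] at hratio
  have hρ : ∀ t ∈ Ioo x' x'', 0 ≤ r t ∧ 2 * r t ≤ 3 * r x₀ := fun t ht => by
    have := hrbd t ht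
    have := hrbd x₀ hx0
    constructor <;> linarith
  have hh : ∀ t ∈ Ioo x' x'',
      HasDerivAt (fun s => f s / deriv f s) (1 + r t * (f t / deriv f t) ^ 2) t := fun t ht =>
    hasDerivAt_div_of_hasDerivAt_neg_mul (hf1 t).hasDerivAt
      ((hf2 t).hasDerivAt.congr_deriv (by linarith [hode t ht])) (hcons t ht)
  subst hseq0
  exact modifiedHalley_monotone_tendsto ordConnected_Ioo (hρ _ hx0).1 hρ hh hxs
    (by simp [hfxs]) hx0 hseq

theorem modified_halley_global_convergence
    (r f : ℝ → ℝ) (x' x'' xs x₀ c₁ c₂ : ℝ) (x : ℕ → ℝ)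
    (hc₁ : 0 < c₁) (hc₂ : 0 < c₂) (hratio : c₁ / c₂ ≤ 3 / 2)
    (hr : ContDiff ℝ 1 r)
    (hf1 : Differentiable ℝ f) (hf2 : Differentiable ℝ (deriv f))
    (hode : ∀ t ∈ Set.Ioo x' x'', deriv (deriv f) t + r t * f t = 0)
    (hnt : ∃ t ∈ Set.Ioo x' x'', f t ≠ 0)
    (hlt : x' < x'')
    (hz' : deriv f x' = 0) (hz'' : deriv f x'' = 0)
    (hcons : ∀ t ∈ Set.Ioo x' x'', deriv f t ≠ 0)
    (hxs : xs ∈ Set.Ioo x' x'') (hfxs : f xs = 0)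
    (huniq : ∀ t ∈ Set.Ioo x' x'', f t = 0 → t = xs)
    (hrbd : ∀ t ∈ Set.Ioo x' x'', c₂ < r t ∧ r t < c₁)
    (hx0 : x₀ ∈ Set.Ioo x' x'')
    (hseq0 : x 0 = x₀)
    (hseq : ∀ n, x (n + 1) = x n
      - 2 * (f (x n) / deriv f (x n)) / (2 + r x₀ * (f (x n) / deriv f (x n)) ^ 2)) :
    ((x₀ ≤ xs → Monotone x) ∧ (xs ≤ x₀ → Antitone x))
    ∧ Filter.Tendsto x Filter.atTop (nhds xs) :=
  modified_halley_global_convergence_general r f x' x'' xs x₀ c₁ c₂ x hc₂ hratio hf1 hf2 hode hcons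
    hxs hfxs hrbd hx0 hseq0 hseq
end
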